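/- Let (U_k) be i.i.d. centered with variance σ², S_n their partial sums, and Z_n = (1/√n)·max_{1≤k≤n} |S_k|. Then for α ≥ 8σ², E[Z_n² · 1_{Z_n² ≥ α}] ≤ 2α·ℙ(|S_n|/√n ≥ √α/2) + 2·E[(4 S_n²/n − α)⁺]. -/

import Mathlib

/-!
On the event `α ≤ Z_n²` one has `Z_n² ≤ α + (Z_n² - α)⁺`, and by the layer-cake formula both
terms are controlled by the tails `ℙ(t ≤ Z_n²)`, `t ≥ α`. Ottaviani's inequality bounds these tails
by `2 ℙ(t ≤ 4 S_n² / n)`; its hypothesis `ℙ(√(tn)/2 ≤ |S_n - S_k|) ≤ 1/2` is Chebyshev's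
inequality, since `Var(S_n - S_k) ≤ nσ² ≤ tn/8`. Integrating the tail bound back gives the claim.
-/

open MeasureTheory ProbabilityTheory
open scoped ENNReal NNReal

section LayerCake

variable {Ω : Type*} {mΩ : MeasurableSpace Ω} {μ : Measure Ω}

theorem lintegral_ofReal_le_mul_of_meas_le {f g : Ω → ℝ} (hf_nn : ∀ ω, 0 ≤ f ω)
    (hg_nn : ∀ ω, 0 ≤ g ω) (hf : Measurable f) (hg : Measurable g) {C : ℝ≥0∞}
    (h : ∀ t > 0, μ {ω | t ≤ f ω} ≤ C * μ {ω | t ≤ g ω}) :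
    ∫⁻ ω, ENNReal.ofReal (f ω) ∂μ ≤ C * ∫⁻ ω, ENNReal.ofReal (g ω) ∂μ := by
  have hanti : Antitone fun t : ℝ => μ {ω | t ≤ g ω} :=
    fun s t hst => measure_mono fun ω hω => hst.trans hω
  rw [lintegral_eq_lintegral_meas_le μ (ae_of_all _ hf_nn) hf.aemeasurable,
    lintegral_eq_lintegral_meas_le μ (ae_of_all _ hg_nn) hg.aemeasurable,
    ← lintegral_const_mul _ hanti.measurable]
  exact setLIntegral_mono (hanti.measurable.const_mul C) h

lemma le_max_sub_zero_iff {t x α : ℝ} (ht : 0 < t) : t ≤ max (x - α) 0 ↔ t + α ≤ x := by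
  rw [le_max_iff, or_iff_left ht.not_ge, le_sub_iff_add_le]

theorem setIntegral_le_of_meas_le [IsFiniteMeasure μ] {X Y : Ω → ℝ} (hX : Measurable X)
    (hY : Measurable Y) (hYi : Integrable Y μ) {α : ℝ} (hα : 0 ≤ α) {C : ℝ≥0}
    (h : ∀ t, α ≤ t → μ {ω | t ≤ X ω} ≤ C * μ {ω | t ≤ Y ω}) :
    ∫ ω in {ω | α ≤ X ω}, X ω ∂μ
      ≤ C * α * (μ {ω | α ≤ Y ω}).toReal + C * ∫ ω, max (Y ω - α) 0 ∂μ := by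
  set Q := {ω | α ≤ X ω}
  have hexcess : ∫⁻ ω, ENNReal.ofReal (max (X ω - α) 0) ∂μ
      ≤ C * ∫⁻ ω, ENNReal.ofReal (max (Y ω - α) 0) ∂μ := by
    refine lintegral_ofReal_le_mul_of_meas_le (fun _ => le_max_right _ _)
      (fun _ => le_max_right _ _) ((hX.sub_const α).max measurable_const)
      ((hY.sub_const α).max measurable_const) fun t ht => ?_
    simp only [le_max_sub_zero_iff ht]
    exact h (t + α) (by linarith)
  have hsplit : ∫⁻ ω in Q, ENNReal.ofReal (X ω) ∂μ
      ≤ ENNReal.ofReal α * μ Q + ∫⁻ ω, ENNReal.ofReal (max (X ω - α) 0) ∂μ :=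
    calc ∫⁻ ω in Q, ENNReal.ofReal (X ω) ∂μ
        ≤ ∫⁻ ω in Q, (ENNReal.ofReal α + ENNReal.ofReal (max (X ω - α) 0)) ∂μ := by
          refine lintegral_mono fun ω => ?_
          rw [← ENNReal.ofReal_add hα (le_max_right _ _)]
          exact ENNReal.ofReal_le_ofReal (by linarith [le_max_left (X ω - α) 0])
      _ = ENNReal.ofReal α * μ Q + ∫⁻ ω in Q, ENNReal.ofReal (max (X ω - α) 0) ∂μ := by
          rw [lintegral_add_left measurable_const, setLIntegral_const]
      _ ≤ _ := add_le_add le_rfl (setLIntegral_le_lintegral _ _)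
  have hQ : μ Q ≤ C * μ {ω | α ≤ Y ω} := h α le_rfl
  have hYfin : ∫⁻ ω, ENNReal.ofReal (max (Y ω - α) 0) ∂μ ≠ ⊤ :=
    ((hYi.sub (integrable_const α)).pos_part).lintegral_lt_top.ne
  have hXQ : ∀ᵐ ω ∂μ.restrict Q, 0 ≤ X ω :=
    (ae_restrict_mem (measurableSet_le measurable_const hX)).mono fun ω (hω : α ≤ X ω) =>
      hα.trans hω
  rw [integral_eq_lintegral_of_nonneg_ae hXQ hX.aestronglyMeasurable,
    integral_eq_lintegral_of_nonneg_ae (f := fun ω => max (Y ω - α) 0)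
      (ae_of_all _ fun _ => le_max_right _ _)
      ((hY.sub_const α).max measurable_const).aestronglyMeasurable]
  calc (∫⁻ ω in Q, ENNReal.ofReal (X ω) ∂μ).toReal
      ≤ (ENNReal.ofReal α * (C * μ {ω | α ≤ Y ω})
          + C * ∫⁻ ω, ENNReal.ofReal (max (Y ω - α) 0) ∂μ).toReal :=
        ENNReal.toReal_mono (by finiteness) (hsplit.trans (by gcongr))
    _ = _ := by
        rw [ENNReal.toReal_add (by finiteness) (by finiteness)]
        simp only [ENNReal.toReal_mul, ENNReal.toReal_ofReal hα, ENNReal.coe_toReal]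
        ring

end LayerCake

section Ottaviani

variable {Ω : Type*} {mΩ : MeasurableSpace Ω} {μ : Measure Ω} {U : ℕ → Ω → ℝ}

lemma measurable_sum_iSup_comap {s : Finset ℕ} {T : Set ℕ} (hs : ↑s ⊆ T) :
    Measurable[⨆ i ∈ T, MeasurableSpace.comap (U i) inferInstance] fun ω => ∑ i ∈ s, U i ω :=
  Finset.measurable_sum _ fun i hi => Measurable.of_comap_le <|
    le_iSup₂ (f := fun i (_ : i ∈ T) => MeasurableSpace.comap (U i) inferInstance) i (hs hi)

lemma measurableSet_disjointed_le_abs_sum (a : ℝ) (k : ℕ) :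
    MeasurableSet[⨆ i ∈ Set.Iio k, MeasurableSpace.comap (U i) inferInstance]
      (disjointed (fun j => {ω | a ≤ |∑ i ∈ Finset.range j, U i ω|}) k) := by
  have hS : ∀ j ≤ k, MeasurableSet[⨆ i ∈ Set.Iio k, MeasurableSpace.comap (U i) inferInstance]
      {ω | a ≤ |∑ i ∈ Finset.range j, U i ω|} := fun j hj =>
    measurable_sum_iSup_comap (fun i hi => (Finset.mem_range.1 hi).trans_le hj)
      (measurable_abs measurableSet_Ici)
  rw [disjointed_eq_inter_compl]
  exact (hS k le_rfl).inter
    (.biInter (Set.to_countable _) fun j hj => (hS j (le_of_lt hj)).compl)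

variable [IsProbabilityMeasure μ]

-- `disjointed` of the level sets is the event that `|S_j|` first reaches `a + b` at `j = k`; it is
-- determined by `U_i, i < k`, hence independent of `S_n - S_k`.
lemma measure_disjointed_le_two_mul (hmeas : ∀ i, Measurable (U i)) (hindep : iIndepFun U μ)
    {a b : ℝ} {k n : ℕ} (hkn : k ≤ n)
    (hinc : μ {ω | b ≤ |∑ i ∈ Finset.Ico k n, U i ω|} ≤ 2⁻¹) :
    μ (disjointed (fun j => {ω | a + b ≤ |∑ i ∈ Finset.range j, U i ω|}) k)
      ≤ 2 * μ (disjointed (fun j => {ω | a + b ≤ |∑ i ∈ Finset.range j, U i ω|}) k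
          ∩ {ω | a ≤ |∑ i ∈ Finset.range n, U i ω|}) := by
  set D := disjointed (fun j => {ω | a + b ≤ |∑ i ∈ Finset.range j, U i ω|}) k
  set F := {ω | |∑ i ∈ Finset.Ico k n, U i ω| < b}
  have hFm : MeasurableSet[⨆ i ∈ Set.Ici k, MeasurableSpace.comap (U i) inferInstance] F :=
    measurable_sum_iSup_comap (fun i hi => (Finset.mem_Ico.1 hi).1)
      (measurable_abs measurableSet_Iio)
  have hindep' := indep_iSup_of_disjoint (fun i => (hmeas i).comap_le)
    ((iIndepFun_iff_iIndep _ _ _).1 hindep) (Set.Iio_disjoint_Ici (le_refl k))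
  have hDF : μ (D ∩ F) = μ D * μ F :=
    (Indep_iff _ _ _).1 hindep' _ _ (measurableSet_disjointed_le_abs_sum _ k) hFm
  have hF : 2⁻¹ ≤ μ F := by
    have : F = {ω | b ≤ |∑ i ∈ Finset.Ico k n, U i ω|}ᶜ := by ext; simp [F]
    rw [this, prob_compl_eq_one_sub (measurableSet_le measurable_const
      (Finset.measurable_sum _ fun i _ => hmeas i).abs)]
    calc (2⁻¹ : ℝ≥0∞) = 1 - 2⁻¹ := ENNReal.one_sub_inv_two.symm
      _ ≤ _ := tsub_le_tsub_left hinc 1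
  have hsub : D ∩ F ⊆ D ∩ {ω | a ≤ |∑ i ∈ Finset.range n, U i ω|} := by
    rintro ω ⟨hDω, hFω⟩
    refine ⟨hDω, ?_⟩
    have hk : a + b ≤ |∑ i ∈ Finset.range k, U i ω| := disjointed_subset _ k hDω
    have hT : |∑ i ∈ Finset.Ico k n, U i ω| < b := hFω
    have htri := abs_sub (∑ i ∈ Finset.range k, U i ω + ∑ i ∈ Finset.Ico k n, U i ω)
      (∑ i ∈ Finset.Ico k n, U i ω)
    rw [add_sub_cancel_right, Finset.sum_range_add_sum_Ico _ hkn] at htri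
    show a ≤ |∑ i ∈ Finset.range n, U i ω|
    linarith
  calc μ D = 2 * (μ D * 2⁻¹) := by
        rw [mul_comm, mul_assoc, ENNReal.inv_mul_cancel two_ne_zero ENNReal.ofNat_ne_top, mul_one]
    _ ≤ 2 * (μ D * μ F) := by gcongr
    _ = 2 * μ (D ∩ F) := by rw [hDF]
    _ ≤ _ := by gcongr

-- Ottaviani's maximal inequality.
theorem measure_exists_le_abs_sum_range_le (hmeas : ∀ i, Measurable (U i))
    (hindep : iIndepFun U μ) {a b : ℝ} {n : ℕ}
    (hinc : ∀ k ≤ n, μ {ω | b ≤ |∑ i ∈ Finset.Ico k n, U i ω|} ≤ 2⁻¹) :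
    μ {ω | ∃ k ≤ n, a + b ≤ |∑ i ∈ Finset.range k, U i ω|}
      ≤ 2 * μ {ω | a ≤ |∑ i ∈ Finset.range n, U i ω|} := by
  set B := fun j => {ω | a + b ≤ |∑ i ∈ Finset.range j, U i ω|}
  set E := {ω | a ≤ |∑ i ∈ Finset.range n, U i ω|}
  have hBm : ∀ j, MeasurableSet (B j) := fun j =>
    measurableSet_le measurable_const (Finset.measurable_sum _ fun i _ => hmeas i).abs
  have hEm : MeasurableSet E :=
    measurableSet_le measurable_const (Finset.measurable_sum _ fun i _ => hmeas i).abs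
  have hunion : {ω | ∃ k ≤ n, a + b ≤ |∑ i ∈ Finset.range k, U i ω|}
      = ⋃ k ∈ Finset.range (n + 1), disjointed B k := by
    rw [biUnion_range_succ_disjointed, partialSups_eq_biUnion_range]
    ext ω
    simp [B]
  have hdisj : Set.PairwiseDisjoint ↑(Finset.range (n + 1)) (disjointed B) :=
    (disjoint_disjointed B).set_pairwise _
  calc μ {ω | ∃ k ≤ n, a + b ≤ |∑ i ∈ Finset.range k, U i ω|}
      = ∑ k ∈ Finset.range (n + 1), μ (disjointed B k) := by
        rw [hunion, measure_biUnion_finset hdisj fun k _ => MeasurableSet.disjointed hBm k]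
    _ ≤ ∑ k ∈ Finset.range (n + 1), 2 * μ (disjointed B k ∩ E) :=
        Finset.sum_le_sum fun k hk =>
          have hkn := Nat.lt_succ_iff.1 (Finset.mem_range.1 hk)
          measure_disjointed_le_two_mul hmeas hindep hkn (hinc k hkn)
    _ = 2 * μ (⋃ k ∈ Finset.range (n + 1), disjointed B k ∩ E) := by
        rw [← Finset.mul_sum, measure_biUnion_finset
          (hdisj.mono fun k => Set.inter_subset_left)
          fun k _ => (MeasurableSet.disjointed hBm k).inter hEm]
    _ ≤ 2 * μ E := by gcongr; exact Set.iUnion₂_subset fun k _ => Set.inter_subset_right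

lemma measure_le_abs_sum_le (hU : ∀ i, MemLp (U i) 2 μ) (hindep : iIndepFun U μ)
    (hmean : ∀ i, μ[U i] = 0) {v : ℝ} (hvar : ∀ i, variance (U i) μ ≤ v) (s : Finset ℕ)
    {c : ℝ} (hc : 0 < c) :
    μ {ω | c ≤ |∑ i ∈ s, U i ω|} ≤ ENNReal.ofReal (s.card * v / c ^ 2) := by
  have hsum_mean : μ[∑ i ∈ s, U i] = 0 := by
    simp only [Finset.sum_apply]
    rw [integral_finsetSum _ fun i _ => (hU i).integrable one_le_two]
    exact Finset.sum_eq_zero fun i _ => hmean i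
  have hsum_var : variance (∑ i ∈ s, U i) μ ≤ s.card * v := by
    rw [IndepFun.variance_sum (fun i _ => hU i) fun i _ j _ hij => hindep.indepFun hij]
    simpa using Finset.sum_le_sum fun i (_ : i ∈ s) => hvar i
  have hcheb := meas_ge_le_variance_div_sq (memLp_finsetSum' s fun i _ => hU i) hc
  rw [hsum_mean] at hcheb
  simp only [sub_zero, Finset.sum_apply] at hcheb
  exact hcheb.trans (ENNReal.ofReal_le_ofReal (by gcongr))

lemma le_sq_div_iff_sqrt_mul_le_abs {t x n : ℝ} (hn : 0 < n) :
    t ≤ x ^ 2 / n ↔ √(t * n) ≤ |x| := by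
  rw [← Real.sqrt_sq_eq_abs, Real.sqrt_le_sqrt_iff (sq_nonneg x), le_div_iff₀ hn]

lemma le_four_mul_sq_div_iff {t x n : ℝ} (hn : 0 < n) :
    t ≤ 4 * x ^ 2 / n ↔ √(t * n) / 2 ≤ |x| := by
  rw [show 4 * x ^ 2 = (2 * x) ^ 2 by ring, le_sq_div_iff_sqrt_mul_le_abs hn, abs_mul, abs_two,
    div_le_iff₀ two_pos, mul_comm |x|]

theorem measure_le_sq_biSup_div_le (hmeas : ∀ i, Measurable (U i)) (hindep : iIndepFun U μ)
    (hU : ∀ i, MemLp (U i) 2 μ) (hmean : ∀ i, μ[U i] = 0) {v : ℝ}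
    (hvar : ∀ i, variance (U i) μ ≤ v) {n : ℕ} (hn : 1 ≤ n) {t : ℝ} (ht0 : 0 < t)
    (ht : 8 * v ≤ t) :
    μ {ω | t ≤ ((⨆ k ∈ Finset.Icc 1 n, |∑ i ∈ Finset.range k, U i ω|) / √n) ^ 2}
      ≤ 2 * μ {ω | t ≤ 4 * (∑ i ∈ Finset.range n, U i ω) ^ 2 / n} := by
  have hn0 : (0 : ℝ) < n := by exact_mod_cast hn
  set c := √(t * n) / 2 with hc_def
  have hc : 0 < c := by positivity
  have hinc : ∀ k ≤ n, μ {ω | c ≤ |∑ i ∈ Finset.Ico k n, U i ω|} ≤ 2⁻¹ := by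
    intro k _
    have hv : 0 ≤ v := (variance_nonneg _ _).trans (hvar 0)
    have hcard : ((Finset.Ico k n).card : ℝ) ≤ n := by
      rw [Nat.card_Ico]; exact_mod_cast Nat.sub_le n k
    refine (measure_le_abs_sum_le hU hindep hmean hvar _ hc).trans ?_
    rw [← ENNReal.ofReal_ofNat 2, ← ENNReal.ofReal_inv_of_pos two_pos]
    refine ENNReal.ofReal_le_ofReal ?_
    rw [div_pow, Real.sq_sqrt (by positivity), div_le_iff₀ (by positivity)]
    nlinarith
  have hmax : {ω | t ≤ ((⨆ k ∈ Finset.Icc 1 n, |∑ i ∈ Finset.range k, U i ω|) / √n) ^ 2}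
      ⊆ {ω | ∃ k ≤ n, c + c ≤ |∑ i ∈ Finset.range k, U i ω|} := by
    intro ω hω
    have hsup_attained := Finset.ciSup_mem_image (fun k => |∑ i ∈ Finset.range k, U i ω|)
      ⟨1, Finset.mem_Icc.2 ⟨le_rfl, hn⟩, by rw [Real.sSup_empty]; exact abs_nonneg _⟩
    obtain ⟨k, hk, hkmax⟩ := Finset.mem_image.1 hsup_attained
    refine ⟨k, (Finset.mem_Icc.1 hk).2, ?_⟩
    rw [Set.mem_ofPred_eq, div_pow, Real.sq_sqrt hn0.le, le_sq_div_iff_sqrt_mul_le_abs hn0,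
      ← hkmax, abs_abs] at hω
    linarith [hc_def]
  have hlast : {ω | t ≤ 4 * (∑ i ∈ Finset.range n, U i ω) ^ 2 / n}
      = {ω | c ≤ |∑ i ∈ Finset.range n, U i ω|} := by
    ext ω
    exact le_four_mul_sq_div_iff hn0
  rw [hlast]
  exact (measure_mono hmax).trans (measure_exists_le_abs_sum_range_le hmeas hindep hinc)

end Ottaviani

/-- For i.i.d. centered (U k) with variance σ², partial sums S and
    Z_n = (1/√n)·max_{1≤k≤n}|S_k|, for α ≥ 8σ²,
    E[Z_n²·1_{Z_n² ≥ α}] ≤ 2α·ℙ(|S_n|/√n ≥ √α/2) + 2·E[(4S_n²/n − α)⁺]. -/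
theorem truncated_max_bound
    {Ω : Type*} [MeasureSpace Ω] [IsProbabilityMeasure (ℙ : Measure Ω)]
    (U : ℕ → Ω → ℝ)
    (hmeas : ∀ k, Measurable (U k))
    (hindep : iIndepFun U ℙ)
    (hident : ∀ k, IdentDistrib (U k) (U 0) ℙ ℙ)
    (hint : MemLp (U 0) 2 ℙ)
    (hcentered : ∫ ω, U 0 ω ∂ℙ = 0)
    (σ : ℝ) (hσ : 0 < σ) (hvar : ∫ ω, (U 0 ω) ^ 2 ∂ℙ = σ ^ 2)
    (S : ℕ → Ω → ℝ) (hS : ∀ k ω, S k ω = ∑ i ∈ Finset.range k, U i ω)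
    (Z : ℕ → Ω → ℝ)
    (hZ : ∀ n ω, Z n ω = (⨆ k ∈ Finset.Icc 1 n, |S k ω|) / Real.sqrt n)
    (n : ℕ) (hn : 1 ≤ n)
    (α : ℝ) (hα : 8 * σ ^ 2 ≤ α) :
    ∫ ω in {ω' : Ω | α ≤ (Z n ω') ^ 2}, (Z n ω) ^ 2 ∂ℙ
      ≤ 2 * α * ((ℙ : Measure Ω) {ω' : Ω | Real.sqrt α / 2 ≤ |S n ω'| / Real.sqrt n}).toReal
        + 2 * ∫ ω, max (4 * (S n ω) ^ 2 / n - α) 0 ∂ℙ := by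
  obtain rfl : S = fun k ω => ∑ i ∈ Finset.range k, U i ω := funext fun k => funext (hS k)
  obtain rfl : Z = fun n ω => (⨆ k ∈ Finset.Icc 1 n, |∑ i ∈ Finset.range k, U i ω|) / √n :=
    funext fun n => funext (hZ n)
  have hn0 : (0 : ℝ) < n := by exact_mod_cast hn
  have hα0 : 0 < α := lt_of_lt_of_le (by positivity) hα
  have hU (i : ℕ) : MemLp (U i) 2 ℙ := (hident i).symm.memLp_snd hint
  have hmean (i : ℕ) : ℙ[U i] = 0 := (hident i).integral_eq.trans hcentered
  have hvar' (i : ℕ) : variance (U i) ℙ ≤ σ ^ 2 := by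
    rw [(hident i).variance_eq, variance_of_integral_eq_zero hint.aemeasurable hcentered, hvar]
  have hevent : {ω | √α / 2 ≤ |∑ i ∈ Finset.range n, U i ω| / √n}
      = {ω | α ≤ 4 * (∑ i ∈ Finset.range n, U i ω) ^ 2 / n} := by
    ext ω
    rw [Set.mem_ofPred_eq, Set.mem_ofPred_eq, le_four_mul_sq_div_iff hn0,
      le_div_iff₀ (Real.sqrt_pos.2 hn0), div_mul_eq_mul_div, Real.sqrt_mul hα0.le]
  have hX : Measurable fun ω =>
      ((⨆ k ∈ Finset.Icc 1 n, |∑ i ∈ Finset.range k, U i ω|) / √n) ^ 2 := by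
    fun_prop
  have hY : Integrable (fun ω => 4 * (∑ i ∈ Finset.range n, U i ω) ^ 2 / n) ℙ :=
    (((memLp_finsetSum _ fun i _ => hU i).integrable_sq).const_mul 4).div_const _
  have key := setIntegral_le_of_meas_le (C := 2) hX (by fun_prop) hY hα0.le fun t ht => by
    exact_mod_cast measure_le_sq_biSup_div_le hmeas hindep hU hmean hvar' hn
      (hα0.trans_le ht) (hα.trans ht)
  rw [hevent]
  exact_mod_cast key
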